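/- arXiv:2112.11836 — 2 statements merged into one kernel-verified Lean document; each statement's English description precedes it below -/
import Mathlib

section
/- For λ ≥ 1, the integral over ℂ of χ_λ(ξ)·4/(1+|ξ|²)² with respect to Lebesgue measure equals (4π/3)(λ² + 1 + λ^{-2}); equivalently, ∫_{S²} χ_λ dA = (4π/3)(λ² + 1 + λ^{-2}) where χ_λ is pulled back to S² by stereographic projection. -/
/-!
The integrand is radial, so polar coordinates turn the integral into
`2π ∫₀^∞ r χ_λ(r) 4/(1+r²)² dr`. In the variable `v = (1 + r²)⁻¹` one has
`r χ_λ(r) 4/(1+r²)² dr = -(2/λ²)(λ² + (1-λ²) v)² dv`, a polynomial on `v ∈ [0, 1]` whose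
integral is `(2/3)(λ² + 1 + λ⁻²)`.
-/

open MeasureTheory

noncomputable def chi (l : ℝ) (ξ : ℂ) : ℝ :=
  (1 + l ^ 2 * ‖ξ‖ ^ 2) ^ 2 / (l ^ 2 * (1 + ‖ξ‖ ^ 2) ^ 2)

open Real Set Filter Topology

theorem Complex.integral_comp_norm {F : Type*} [NormedAddCommGroup F] [NormedSpace ℝ F]
    (f : ℝ → F) : ∫ ξ : ℂ, f ‖ξ‖ = (2 * π) • ∫ r in Ioi (0 : ℝ), r • f r := by
  rw [integral_fun_norm_addHaar volume f, ← Nat.cast_smul_eq_nsmul ℝ, smul_smul]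
  simp [Complex.finrank_real_complex, Measure.real, Complex.volume_ball]

noncomputable def chiSphericalPrimitive (l v : ℝ) : ℝ :=
  -(2 / l ^ 2) * (l ^ 4 * v + (1 - l ^ 2) * l ^ 2 * v ^ 2 + (1 - l ^ 2) ^ 2 / 3 * v ^ 3)

theorem hasDerivAt_chiSphericalPrimitive {l : ℝ} (hl : l ≠ 0) (r : ℝ) :
    HasDerivAt (fun r ↦ chiSphericalPrimitive l (1 + r ^ 2)⁻¹)
      (r * (chi l r * (4 / (1 + r ^ 2) ^ 2))) r := by
  have hu : 1 + r ^ 2 ≠ 0 := by positivity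
  have hv := ((hasDerivAt_pow 2 r).const_add 1).inv hu
  have := ((hv.const_mul (l ^ 4)).add ((hv.pow 2).const_mul ((1 - l ^ 2) * l ^ 2))).add
    ((hv.pow 3).const_mul ((1 - l ^ 2) ^ 2 / 3)) |>.const_mul (-(2 / l ^ 2))
  refine this.congr_deriv ?_
  simp only [chi, Complex.norm_real, Real.norm_eq_abs, sq_abs, Pi.inv_apply, Nat.cast_ofNat,
    Nat.add_one_sub_one, pow_one]
  field_simp
  ring

theorem tendsto_chiSphericalPrimitive_atTop (l : ℝ) :
    Tendsto (fun r ↦ chiSphericalPrimitive l (1 + r ^ 2)⁻¹) atTop (𝓝 0) := by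
  have hv : Tendsto (fun r : ℝ ↦ (1 + r ^ 2)⁻¹) atTop (𝓝 0) := tendsto_inv_atTop_zero.comp <|
    tendsto_atTop_add_const_left _ 1 (tendsto_pow_atTop two_ne_zero)
  have hcont : Continuous (chiSphericalPrimitive l) := by
    unfold chiSphericalPrimitive
    fun_prop
  have hzero : chiSphericalPrimitive l 0 = 0 := by simp [chiSphericalPrimitive]
  exact hzero ▸ (hcont.tendsto 0).comp hv

theorem integral_Ioi_mul_chi_mul_sphericalDensity {l : ℝ} (hl : l ≠ 0) :
    ∫ r in Ioi (0 : ℝ), r * (chi l r * (4 / (1 + r ^ 2) ^ 2)) =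
      (2 / 3) * (l ^ 2 + 1 + (l ^ 2)⁻¹) := by
  rw [integral_Ioi_of_hasDerivAt_of_nonneg' (fun r _ ↦ hasDerivAt_chiSphericalPrimitive hl r)
    (fun r hr ↦ ?_) (tendsto_chiSphericalPrimitive_atTop l)]
  · simp only [chiSphericalPrimitive]
    field_simp
    ring
  · have : 0 < r := hr
    unfold chi
    positivity

/-- `∫_{S²} χ_λ dA = (4π/3)(λ² + 1 + λ^{-2})`, computed in stereographic coordinates with the
spherical area element `4/(1+|ξ|²)² dA_ℂ`. -/
theorem stmt6 (l : ℝ) (hl : 1 ≤ l) :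
    ∫ ξ : ℂ, chi l ξ * (4 / (1 + ‖ξ‖ ^ 2) ^ 2) =
      (4 * Real.pi / 3) * (l ^ 2 + 1 + (l ^ 2)⁻¹) := by
  let f : ℝ → ℝ := fun r ↦ chi l r * (4 / (1 + r ^ 2) ^ 2)
  have hradial : ∫ ξ : ℂ, chi l ξ * (4 / (1 + ‖ξ‖ ^ 2) ^ 2) = ∫ ξ : ℂ, f ‖ξ‖ := by
    simp only [f, chi, Complex.norm_real, Real.norm_eq_abs, abs_norm]
  rw [hradial, Complex.integral_comp_norm f]
  simp only [f, smul_eq_mul]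
  rw [integral_Ioi_mul_chi_mul_sphericalDensity (zero_lt_one.trans_le hl).ne']
  ring
end

section
/- For 0 < ε < 1/4 set Λ = ε^{-1/4} and define f : [0,π] → ℝ by f(r) = 2 arctan(Λ tan r) for 0 ≤ r ≤ π/2 and f(r) = 2 arctan(Λ tan r) + 2π for π/2 < r ≤ π. Then f(0)=0, f(π)=2π, f is monotone increasing, and the Dirichlet energy of the associated rotationally symmetric map satisfies (1/2)∫_{S²}|∇u_f|² dA = 8π∫₀¹ Λ^{-2}(1+t²)/(1−a²t²)² dt ≤ 8πΛ²/(Λ²−1), where a² = 1 − Λ^{-2}. -/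
/-!
On `(0, π)` the two branches of the profile glue into the single smooth function
`π - 2 arctan (cot r / Λ)`, whose derivative `2Λ / (cos² r + Λ² sin² r)` is positive, which gives
monotonicity. Since `sin f = sin r cos r f'`, the Dirichlet integrand is `f'² (1 + cos² r) sin r`,
and the substitution `t = cos r` followed by the evenness in `t` turns the energy into
`8π ∫₀¹ Λ⁻² (1 + t²) / (1 - a² t²)² dt`. Finally `1 + t² ≤ (1 + a² t²) / a²`, and
`(1 + a² t²) / (1 - a² t²)²` has the antiderivative `t / (1 - a² t²)`, so the integral is at most
`Λ⁻² / (a² (1 - a²)) = Λ² / (Λ² - 1)`.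
-/

open MeasureTheory Real Set

theorem Real.sin_two_mul_arctan (y : ℝ) : sin (2 * arctan y) = 2 * y / (1 + y ^ 2) := by
  have h : √(1 + y ^ 2) ^ 2 = 1 + y ^ 2 := sq_sqrt (by positivity)
  have h0 : √(1 + y ^ 2) ≠ 0 := by positivity
  rw [sin_two_mul, sin_arctan, cos_arctan]
  field_simp
  rw [h]

theorem MonotoneOn.Icc_of_Ioo {f : ℝ → ℝ} {a b : ℝ} (hf : MonotoneOn f (Ioo a b))
    (ha : ∀ x ∈ Icc a b, f a ≤ f x) (hb : ∀ x ∈ Icc a b, f x ≤ f b) :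
    MonotoneOn f (Icc a b) := by
  intro x hx y hy hxy
  rcases hx.1.eq_or_lt with rfl | hax
  · exact ha y hy
  rcases hy.2.eq_or_lt with rfl | hyb
  · exact hb x hx
  exact hf ⟨hax, hxy.trans_lt hyb⟩ ⟨hax.trans_le hxy, hyb⟩ hxy

theorem intervalIntegral.integral_comp_cos_mul_sin (G : ℝ → ℝ) :
    ∫ r in (0 : ℝ)..π, G (cos r) * sin r = ∫ t in (-1 : ℝ)..1, G t := by
  have h := intervalIntegral.integral_comp_mul_deriv_of_deriv_nonpos (g := G)
    continuous_cos.continuousOn (fun x _ => hasDerivAt_cos x)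
    (fun x hx => by
      rw [min_eq_left pi_pos.le, max_eq_right pi_pos.le] at hx
      exact neg_nonpos.2 (sin_pos_of_pos_of_lt_pi hx.1 hx.2).le)
  simp only [Function.comp_apply, mul_neg, intervalIntegral.integral_neg, cos_zero, cos_pi] at h
  rw [intervalIntegral.integral_symm 1 (-1), ← h, neg_neg]

theorem intervalIntegral.integral_neg_self_eq_two_mul_of_even {G : ℝ → ℝ} {a : ℝ}
    (hG : ∀ x, G (-x) = G x) (hint : IntervalIntegrable G volume (-a) a) :
    ∫ x in -a..a, G x = 2 * ∫ x in 0..a, G x := by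
  have hleft : ∫ x in -a..0, G x = ∫ x in 0..a, G x := by
    simpa [hG] using (intervalIntegral.integral_comp_neg (a := 0) (b := a) (f := G)).symm
  have h0 : (0 : ℝ) ∈ uIcc (-a) a := by
    rcases le_total 0 a with h | h <;> simp [h]
  rw [← intervalIntegral.integral_add_adjacent_intervals
    (hint.mono_set (uIcc_subset_uIcc left_mem_uIcc h0))
    (hint.mono_set (uIcc_subset_uIcc h0 right_mem_uIcc)), hleft]
  ring

theorem one_sub_mul_sq_pos {c t : ℝ} (hc : c < 1) (ht : t ∈ Icc (-1) 1) : 0 < 1 - c * t ^ 2 := by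
  have ht2 : t ^ 2 ≤ 1 := by nlinarith [ht.1, ht.2]
  rcases le_or_gt c 0 with h | h
  · nlinarith [sq_nonneg t]
  · nlinarith [mul_le_mul_of_nonneg_left ht2 h.le]

theorem hasDerivAt_div_one_sub_mul_sq {c t : ℝ} (ht : 1 - c * t ^ 2 ≠ 0) :
    HasDerivAt (fun t => t / (1 - c * t ^ 2)) ((1 + c * t ^ 2) / (1 - c * t ^ 2) ^ 2) t := by
  have hden : HasDerivAt (fun t : ℝ => 1 - c * t ^ 2) (-(c * (2 * t))) t := by
    simpa using ((hasDerivAt_pow 2 t).const_mul c).const_sub 1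
  exact ((hasDerivAt_id' t).div hden ht).congr_deriv (by ring)

theorem uIcc_zero_one_subset_Icc : uIcc (0 : ℝ) 1 ⊆ Icc (-1) 1 := by
  rw [uIcc_of_le zero_le_one]
  exact Icc_subset_Icc (by norm_num) le_rfl

theorem intervalIntegrable_one_add_mul_sq_div_sq {c : ℝ} (hc : c < 1) :
    IntervalIntegrable (fun t => (1 + c * t ^ 2) / (1 - c * t ^ 2) ^ 2) volume 0 1 :=
  ContinuousOn.intervalIntegrable <| ContinuousOn.div (by fun_prop) (by fun_prop) fun _ ht =>
    (pow_pos (one_sub_mul_sq_pos hc (uIcc_zero_one_subset_Icc ht)) 2).ne'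

theorem integral_one_add_mul_sq_div_sq {c : ℝ} (hc : c < 1) :
    ∫ t in (0 : ℝ)..1, (1 + c * t ^ 2) / (1 - c * t ^ 2) ^ 2 = 1 / (1 - c) := by
  have hpos : ∀ t ∈ uIcc (0 : ℝ) 1, 0 < 1 - c * t ^ 2 := fun t ht =>
    one_sub_mul_sq_pos hc (uIcc_zero_one_subset_Icc ht)
  rw [intervalIntegral.integral_eq_sub_of_hasDerivAt
    (fun t ht => hasDerivAt_div_one_sub_mul_sq (hpos t ht).ne')
    (intervalIntegrable_one_add_mul_sq_div_sq hc)]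
  simp

/-- With `b = Λ⁻²` and `a² = 1 - b` this is the paper's `Λ⁻² (1 + t²) / (1 - a² t²)²`. -/
noncomputable def energyDensity (b t : ℝ) : ℝ := b * (1 + t ^ 2) / (1 - (1 - b) * t ^ 2) ^ 2

theorem continuousOn_energyDensity {b : ℝ} (hb : 0 < b) :
    ContinuousOn (energyDensity b) (Icc (-1) 1) :=
  ContinuousOn.div (by fun_prop) (by fun_prop) fun _ ht =>
    (pow_pos (one_sub_mul_sq_pos (by linarith) ht) 2).ne'

theorem integral_energyDensity_le {b : ℝ} (hb0 : 0 < b) (hb1 : b < 1) :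
    ∫ t in (0 : ℝ)..1, energyDensity b t ≤ 1 / (1 - b) := by
  have hint : IntervalIntegrable (energyDensity b) volume 0 1 :=
    ((continuousOn_energyDensity hb0).mono uIcc_zero_one_subset_Icc).intervalIntegrable
  calc ∫ t in (0 : ℝ)..1, energyDensity b t
      ≤ ∫ t in (0 : ℝ)..1, b / (1 - b) * ((1 + (1 - b) * t ^ 2) / (1 - (1 - b) * t ^ 2) ^ 2) := by
        refine intervalIntegral.integral_mono_on zero_le_one hint ?_ fun t ht => ?_
        · exact (intervalIntegrable_one_add_mul_sq_div_sq (by linarith)).const_mul _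
        · rw [energyDensity, ← mul_div_assoc]
          gcongr ?_ / _
          rw [div_mul_eq_mul_div, le_div_iff₀ (by linarith)]
          nlinarith [mul_nonneg hb0.le (sq_nonneg t)]
    _ = 1 / (1 - b) := by
        rw [intervalIntegral.integral_const_mul, integral_one_add_mul_sq_div_sq (by linarith)]
        have hb1' : 1 - b ≠ 0 := by linarith
        field_simp [hb0.ne']
        ring

noncomputable def arctanProfile (Λ : ℝ) : ℝ → ℝ := fun r =>
  if r < π / 2 then 2 * arctan (Λ * tan r)
  else if r = π / 2 then π
  else 2 * arctan (Λ * tan r) + 2 * π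

theorem arctanProfile_zero (Λ : ℝ) : arctanProfile Λ 0 = 0 := by
  simp [arctanProfile, pi_pos]

theorem arctanProfile_pi (Λ : ℝ) : arctanProfile Λ π = 2 * π := by
  have h₁ : ¬ π < π / 2 := by linarith [pi_pos]
  have h₂ : π ≠ π / 2 := by linarith [pi_pos]
  simp [arctanProfile, h₁, h₂]

theorem arctanProfile_eq_pi_sub {Λ r : ℝ} (hΛ : 0 < Λ) (hr : r ∈ Ioo 0 π) :
    arctanProfile Λ r = π - 2 * arctan (cos r / (Λ * sin r)) := by
  have hs : 0 < sin r := sin_pos_of_pos_of_lt_pi hr.1 hr.2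
  have hinv : (Λ * tan r)⁻¹ = cos r / (Λ * sin r) := by
    rw [tan_eq_sin_div_cos, mul_div_assoc', inv_div]
  unfold arctanProfile
  split_ifs with h₁ h₂
  · rw [← hinv, arctan_inv_of_pos (mul_pos hΛ (tan_pos_of_pos_of_lt_pi_div_two hr.1 h₁))]
    ring
  · simp [h₂]
  · have hc : cos r < 0 :=
      cos_neg_of_pi_div_two_lt_of_lt ((not_lt.1 h₁).lt_of_ne' h₂) (by linarith [hr.2])
    have htan : tan r < 0 := by rw [tan_eq_sin_div_cos]; exact div_neg_of_pos_of_neg hs hc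
    rw [← hinv, arctan_inv_of_neg (mul_neg_of_pos_of_neg hΛ htan)]
    ring

theorem hasDerivAt_pi_sub_two_mul_arctan_cos_div {Λ r : ℝ} (hΛ : Λ ≠ 0) (hs : sin r ≠ 0) :
    HasDerivAt (fun r => π - 2 * arctan (cos r / (Λ * sin r)))
      (2 * Λ / (cos r ^ 2 + Λ ^ 2 * sin r ^ 2)) r := by
  have hquot := (hasDerivAt_cos r).div ((hasDerivAt_sin r).const_mul Λ) (mul_ne_zero hΛ hs)
  refine (((hasDerivAt_arctan _).comp r hquot).const_mul 2 |>.const_sub π).congr_deriv ?_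
  simp only [Pi.div_apply]
  field_simp
  linear_combination (cos r ^ 2 + Λ ^ 2 * sin r ^ 2) * sin_sq_add_cos_sq r

theorem hasDerivAt_arctanProfile {Λ r : ℝ} (hΛ : 0 < Λ) (hr : r ∈ Ioo 0 π) :
    HasDerivAt (arctanProfile Λ) (2 * Λ / (cos r ^ 2 + Λ ^ 2 * sin r ^ 2)) r :=
  (hasDerivAt_pi_sub_two_mul_arctan_cos_div hΛ.ne'
    (sin_pos_of_pos_of_lt_pi hr.1 hr.2).ne').congr_of_eventuallyEq
    (Filter.eventually_of_mem (Ioo_mem_nhds hr.1 hr.2) fun _ hx => arctanProfile_eq_pi_sub hΛ hx)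

theorem sin_arctanProfile {Λ r : ℝ} (hΛ : 0 < Λ) (hr : r ∈ Ioo 0 π) :
    sin (arctanProfile Λ r) = sin r * cos r * (2 * Λ / (cos r ^ 2 + Λ ^ 2 * sin r ^ 2)) := by
  have hs : 0 < sin r := sin_pos_of_pos_of_lt_pi hr.1 hr.2
  rw [arctanProfile_eq_pi_sub hΛ hr, sin_pi_sub, sin_two_mul_arctan]
  field_simp
  ring

theorem arctanProfile_mem_Icc {Λ r : ℝ} (hΛ : 0 < Λ) (hr : r ∈ Icc 0 π) :
    arctanProfile Λ r ∈ Icc 0 (2 * π) := by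
  rcases hr.1.eq_or_lt with rfl | h₀
  · simp [arctanProfile_zero, pi_pos.le]
  rcases hr.2.eq_or_lt with rfl | hπ
  · simp [arctanProfile_pi, pi_pos.le]
  rw [arctanProfile_eq_pi_sub hΛ ⟨h₀, hπ⟩]
  have hlow := neg_pi_div_two_lt_arctan (cos r / (Λ * sin r))
  have hhigh := arctan_lt_pi_div_two (cos r / (Λ * sin r))
  constructor <;> linarith

theorem monotoneOn_arctanProfile {Λ : ℝ} (hΛ : 0 < Λ) :
    MonotoneOn (arctanProfile Λ) (Icc 0 π) := by
  have hmono : StrictMonoOn (arctanProfile Λ) (Ioo 0 π) :=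
    strictMonoOn_of_deriv_pos (convex_Ioo 0 π)
      (fun r hr => (hasDerivAt_arctanProfile hΛ hr).continuousAt.continuousWithinAt)
      fun r hr => by
        rw [interior_Ioo] at hr
        rw [(hasDerivAt_arctanProfile hΛ hr).deriv]
        have hs := sin_pos_of_pos_of_lt_pi hr.1 hr.2
        positivity
  refine hmono.monotoneOn.Icc_of_Ioo (fun r hr => ?_) fun r hr => ?_
  · simpa [arctanProfile_zero] using (arctanProfile_mem_Icc hΛ hr).1
  · simpa [arctanProfile_pi] using (arctanProfile_mem_Icc hΛ hr).2

theorem arctanProfile_dirichletIntegrand_eq {Λ r : ℝ} (hΛ : 0 < Λ) (hr : r ∈ Ioo 0 π) :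
    (deriv (arctanProfile Λ) r ^ 2 + sin (arctanProfile Λ r) ^ 2 / sin r ^ 2) * sin r =
      4 * energyDensity (Λ ^ 2)⁻¹ (cos r) * sin r := by
  have hs : 0 < sin r := sin_pos_of_pos_of_lt_pi hr.1 hr.2
  have hden : 1 - (1 - (Λ ^ 2)⁻¹) * cos r ^ 2 = (cos r ^ 2 + Λ ^ 2 * sin r ^ 2) / Λ ^ 2 := by
    field_simp
    linear_combination -Λ ^ 2 * sin_sq_add_cos_sq r
  rw [(hasDerivAt_arctanProfile hΛ hr).deriv, sin_arctanProfile hΛ hr, energyDensity, hden]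
  field_simp
  ring

theorem integral_arctanProfile_dirichletIntegrand {Λ : ℝ} (hΛ : 0 < Λ) :
    ∫ r in (0 : ℝ)..π,
        (deriv (arctanProfile Λ) r ^ 2 + sin (arctanProfile Λ r) ^ 2 / sin r ^ 2) * sin r =
      8 * ∫ t in (0 : ℝ)..1, energyDensity (Λ ^ 2)⁻¹ t := by
  have hb : 0 < (Λ ^ 2)⁻¹ := by positivity
  have heven : ∀ t, energyDensity (Λ ^ 2)⁻¹ (-t) = energyDensity (Λ ^ 2)⁻¹ t := fun t => by
    simp [energyDensity]
  rw [intervalIntegral.integral_congr_Ioo_of_le pi_pos.le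
      fun r hr => arctanProfile_dirichletIntegrand_eq hΛ hr,
    intervalIntegral.integral_comp_cos_mul_sin (fun t => 4 * energyDensity (Λ ^ 2)⁻¹ t),
    intervalIntegral.integral_const_mul,
    intervalIntegral.integral_neg_self_eq_two_mul_of_even heven
      ((continuousOn_energyDensity hb).intervalIntegrable_of_Icc (by norm_num))]
  ring

/-- For `0 < ε < 1/4`, `Λ = ε^{-1/4}`, and `f(r) = 2 arctan(Λ tan r)` on `[0,π/2)`
(continuously extended by `f(π/2) = π`) and `f(r) = 2 arctan(Λ tan r) + 2π` on `(π/2, π]`: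
`f(0)=0`, `f(π)=2π`, `f` is monotone increasing on `[0,π]`, and the Dirichlet energy of the
associated rotationally symmetric map `u_f` (namely `π ∫₀^π ((f')² + sin²f/sin²r) sin r dr`)
equals `8π ∫₀¹ Λ^{-2}(1+t²)/(1−a²t²)² dt ≤ 8πΛ²/(Λ²−1)`, where `a² = 1 − Λ^{-2}`. -/
theorem stmt19 (ε : ℝ) (hε : 0 < ε) (hε' : ε < 1 / 4)
    (Λ : ℝ) (hΛ : Λ = ε ^ (-(1 / 4 : ℝ)))
    (f : ℝ → ℝ)
    (hf : f = fun r =>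
      if r < Real.pi / 2 then 2 * Real.arctan (Λ * Real.tan r)
      else if r = Real.pi / 2 then Real.pi
      else 2 * Real.arctan (Λ * Real.tan r) + 2 * Real.pi) :
    f 0 = 0 ∧ f Real.pi = 2 * Real.pi ∧ MonotoneOn f (Set.Icc 0 Real.pi) ∧
    Real.pi * (∫ r in (0 : ℝ)..Real.pi,
        ((deriv f r) ^ 2 + Real.sin (f r) ^ 2 / Real.sin r ^ 2) * Real.sin r) =
      8 * Real.pi * (∫ t in (0 : ℝ)..1,
        (Λ ^ 2)⁻¹ * (1 + t ^ 2) / (1 - (1 - (Λ ^ 2)⁻¹) * t ^ 2) ^ 2) ∧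
    8 * Real.pi * (∫ t in (0 : ℝ)..1,
        (Λ ^ 2)⁻¹ * (1 + t ^ 2) / (1 - (1 - (Λ ^ 2)⁻¹) * t ^ 2) ^ 2) ≤
      8 * Real.pi * Λ ^ 2 / (Λ ^ 2 - 1) := by
  have hΛ1 : 1 < Λ := hΛ ▸ one_lt_rpow_of_pos_of_lt_one_of_neg hε (by linarith) (by norm_num)
  have hΛ0 : 0 < Λ := one_pos.trans hΛ1
  obtain rfl : f = arctanProfile Λ := hf
  refine ⟨arctanProfile_zero Λ, arctanProfile_pi Λ, monotoneOn_arctanProfile hΛ0, ?_, ?_⟩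
  · rw [integral_arctanProfile_dirichletIntegrand hΛ0]
    unfold energyDensity
    ring
  · have hΛ2 : Λ ^ 2 - 1 ≠ 0 := by nlinarith
    calc 8 * π * ∫ t in (0 : ℝ)..1, energyDensity (Λ ^ 2)⁻¹ t
        ≤ 8 * π * (1 / (1 - (Λ ^ 2)⁻¹)) := by
          gcongr
          exact integral_energyDensity_le (by positivity) (inv_lt_one_of_one_lt₀ (by nlinarith))
      _ = 8 * π * Λ ^ 2 / (Λ ^ 2 - 1) := by
          field_simp
end
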